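/- Let U' be a class on level i+1 of the profile tree T. Then labels(U') ∩ {gl(W) | W a class on level i} = {gl(U) | U ∈ lpf_i(U')}; that is, the valid labels of U' that occur on level i are exactly the labels of the ⋖̲_i-uncles of U'. -/

import Mathlib

/-!
Profile trees for Büchi determinization (Fisman–Kupferman–Vardi–Wilke style profiles).
Common definitions: nondeterministic Büchi word automata (NBW), the run DAG `G`,
profiles of nodes, and the pruned run DAG `G'`.
-/

/-- A nondeterministic Büchi word automaton `A = (Alph, Q, Qin, ρ, F)` with `Qin ∩ F = ∅`. -/
structure NBW (Alph Q : Type*) where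
  Qin : Set Q
  ρ : Q → Alph → Set Q
  F : Set Q
  disj : Qin ∩ F = ∅

variable {Alph Q : Type*} (A : NBW Alph Q) (w : ℕ → Alph)

/-- Lexicographic order `L₁ ≤ L₂` on profiles (lists over ℕ). -/
def lexLE (L₁ L₂ : List ℕ) : Prop :=
  List.Lex (· < ·) L₁ L₂ ∨ L₁ = L₂

/-- Strict lexicographic order `L₁ < L₂` on profiles. -/
def lexLT (L₁ L₂ : List ℕ) : Prop :=
  List.Lex (· < ·) L₁ L₂

open Classical in
/-- The profiles of all finite initial runs of `A` (on `w`) to the node `v = (q, i)`: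
for each run `p₀,…,p_i` with `p₀ ∈ Qin`, `p_{j+1} ∈ ρ(p_j, w_j)` and `p_i = q`, the
sequence of `F`-visitation labels `f(p₀,0) ⋯ f(p_i,i)` (where `f` is 1 on `F`-nodes, else 0). -/
def runProfiles (v : Q × ℕ) : Set (List ℕ) :=
  { L | ∃ p : ℕ → Q, p 0 ∈ A.Qin ∧ (∀ j < v.2, p (j + 1) ∈ A.ρ (p j) (w j)) ∧
        p v.2 = v.1 ∧ L = (List.range (v.2 + 1)).map (fun j => if p j ∈ A.F then 1 else 0) }

/-- `v` is a node of the run DAG `G = (V, E)` (equivalently of the pruned DAG `G'`):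
there is a finite run of `A` to `v.1` on `w₀ ⋯ w_{v.2 - 1}`. -/
def memV (v : Q × ℕ) : Prop := (runProfiles A w v).Nonempty

/-- `L` is the lexicographically maximal profile among all initial paths to `v`. -/
def IsMaxProfile (v : Q × ℕ) (L : List ℕ) : Prop :=
  L ∈ runProfiles A w v ∧ ∀ L' ∈ runProfiles A w v, lexLE L' L

open Classical in
/-- The profile `h_v` of a node `v`: the lexicographically maximal profile of an
initial path to `v` (junk value `[]` if `v` is not a node of the DAG). -/
noncomputable def profile (v : Q × ℕ) : List ℕ :=
  if h : ∃ L, IsMaxProfile A w v L then h.choose else []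

/-- The edge relation `E` of the run DAG `G`: `E((q,i), (q',i+1))` iff `(q,i) ∈ V`
and `q' ∈ ρ(q, w_i)`. -/
def edgeG (u v : Q × ℕ) : Prop :=
  memV A w u ∧ v.2 = u.2 + 1 ∧ v.1 ∈ A.ρ u.1 (w u.2)

/-- The edge relation `E'` of the pruned run DAG `G'`: `(u,v) ∈ E` and every
`E`-parent `u'` of `v` satisfies `h_{u'} ≤ h_u`. -/
def edgeG' (u v : Q × ℕ) : Prop :=
  edgeG A w u v ∧ ∀ u', edgeG A w u' v → lexLE (profile A w u') (profile A w u)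

/-- The equivalence class (under equality of profiles, levelwise) of a node `u` of `G'`. -/
def classOf (u : Q × ℕ) : Set (Q × ℕ) :=
  { v | memV A w v ∧ v.2 = u.2 ∧ profile A w v = profile A w u }

/-- `C` is a class (node) of the profile tree `T` on level `i`. -/
def ClassAt (C : Set (Q × ℕ)) (i : ℕ) : Prop :=
  ∃ u, memV A w u ∧ u.2 = i ∧ C = classOf A w u

/-- The child relation of the profile tree `T`: `[v]` is a child of `[u]`
whenever `(u, v) ∈ E'`. -/
def childC (C D : Set (Q × ℕ)) : Prop :=
  ∃ u v, edgeG' A w u v ∧ memV A w v ∧ C = classOf A w u ∧ D = classOf A w v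

/-- `D` is a descendant of `C` in `T`: there is a (possibly empty) path from `C` to `D`. -/
def DescC : Set (Q × ℕ) → Set (Q × ℕ) → Prop := Relation.ReflTransGen (childC A w)

/-- `C` is an `F`-class: all its members are `F`-nodes. -/
def IsFClass (C : Set (Q × ℕ)) : Prop := ∀ v ∈ C, v.1 ∈ A.F

/-- `h_C ≤ h_D` for classes `C`, `D` (members of a class all share one profile). -/
def profLE (C D : Set (Q × ℕ)) : Prop :=
  ∀ u ∈ C, ∀ v ∈ D, lexLE (profile A w u) (profile A w v)

/-- `h_C < h_D` for classes `C`, `D`. -/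
def profLT (C D : Set (Q × ℕ)) : Prop :=
  ∀ u ∈ C, ∀ v ∈ D, lexLT (profile A w u) (profile A w v)

/-- `C` (a class on level `i`) is before `D` (a class on level `j`):
`i < j`, or `i = j` and `h_C < h_D`. -/
def BeforeC (C : Set (Q × ℕ)) (i : ℕ) (D : Set (Q × ℕ)) (j : ℕ) : Prop :=
  i < j ∨ (i = j ∧ profLT A w C D)

/-- `C` (on level `i`) is `first(m)` for the labeling `gl`: the first class
(in the `before` order) labeled `m`. -/
def IsFirst (gl : Set (Q × ℕ) → ℕ) (m : ℕ) (C : Set (Q × ℕ)) (i : ℕ) : Prop :=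
  ClassAt A w C i ∧ gl C = m ∧
    ∀ D j, ClassAt A w D j → gl D = m → ¬ BeforeC A w D j C i

/-- `C` is a descendant of `first(m)` (for the labeling `gl`). -/
def DescFirst (gl : Set (Q × ℕ) → ℕ) (m : ℕ) (C : Set (Q × ℕ)) : Prop :=
  ∃ Fm j, IsFirst A w gl m Fm j ∧ DescC A w Fm C

/-- `C = lmd(m, i)` for the labeling `gl`: `C` is the class of lexicographically
minimal profile among the descendants of `first(m)` on level `i`. -/
def IsLmd (gl : Set (Q × ℕ) → ℕ) (m i : ℕ) (C : Set (Q × ℕ)) : Prop :=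
  ClassAt A w C i ∧ DescFirst A w gl m C ∧
    ∀ D, ClassAt A w D i → DescFirst A w gl m D → profLE A w C D

/-- `gl` is the global labeling of the profile tree `T`:
`gl(U₀) = 0` for the level-0 class; for every class `U` on level `i`,
if `labels(U) = {m ∣ U = lmd(m,i)}` is nonempty then `gl(U) = min(labels(U))`,
and otherwise `gl(U) = 1 + max{gl(W) ∣ W before U}`. -/
def GlSpec (gl : Set (Q × ℕ) → ℕ) : Prop :=
  (∀ C, ClassAt A w C 0 → gl C = 0) ∧
  ∀ C i, ClassAt A w C i →
    ((∃ m, IsLmd A w gl m i C) →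
        IsLmd A w gl (gl C) i C ∧ ∀ m, IsLmd A w gl m i C → gl C ≤ m) ∧
    ((¬ ∃ m, IsLmd A w gl m i C) →
        (∃ D j, ClassAt A w D j ∧ BeforeC A w D j C i ∧ gl C = gl D + 1) ∧
        ∀ D j, ClassAt A w D j → BeforeC A w D j C i → gl D < gl C)

/-- The minimal-cousin relation `U ⋖̲_i W`: both are classes on level `i` and
`W` is a descendant of `first(gl(U))`. -/
def LRrel (gl : Set (Q × ℕ) → ℕ) (i : ℕ) (U W : Set (Q × ℕ)) : Prop :=
  ClassAt A w U i ∧ ClassAt A w W i ∧ DescFirst A w gl (gl U) W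

/-- `C = lsf_i(U)`: `C` is the `≼_{i+1}`-minimal element of
`{W' ∣ W' is a child of some W with U ⋖̲_i W}`. -/
def IsLsf (gl : Set (Q × ℕ) → ℕ) (i : ℕ) (U C : Set (Q × ℕ)) : Prop :=
  (ClassAt A w C (i + 1) ∧ ∃ W, LRrel A w gl i U W ∧ childC A w W C) ∧
  ∀ D, (ClassAt A w D (i + 1) ∧ ∃ W, LRrel A w gl i U W ∧ childC A w W D) →
    profLE A w C D

/-!
Once a label `m` occurs on level `i`, the class `first(m)` lies on a level `≤ i`, so every
descendant of `first(m)` on level `i + 1` is a child of a descendant of `first(m)` on level `i`.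
Hence, for `U` on level `i`, the classes over which `lsf_i(U)` is minimised are exactly the
descendants of `first(gl U)` on level `i + 1`, i.e. `lsf_i(U) = lmd(gl U, i + 1)`.
-/

section

variable {A w}

theorem ClassAt.snd_eq_of_mem {C : Set (Q × ℕ)} {i : ℕ} (hC : ClassAt A w C i) {v : Q × ℕ}
    (hv : v ∈ C) : v.2 = i := by
  obtain ⟨u, -, rfl, rfl⟩ := hC
  exact hv.2.1

theorem ClassAt.nonempty {C : Set (Q × ℕ)} {i : ℕ} (hC : ClassAt A w C i) : C.Nonempty := by
  obtain ⟨u, hu, -, rfl⟩ := hC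
  exact ⟨u, hu, rfl, rfl⟩

theorem ClassAt.level_eq {C : Set (Q × ℕ)} {i j : ℕ} (hi : ClassAt A w C i)
    (hj : ClassAt A w C j) : i = j := by
  obtain ⟨v, hv⟩ := hi.nonempty
  rw [← hi.snd_eq_of_mem hv, ← hj.snd_eq_of_mem hv]

theorem childC.classAt_of_classAt_succ {C D : Set (Q × ℕ)} {i : ℕ} (h : childC A w C D)
    (hD : ClassAt A w D (i + 1)) : ClassAt A w C i := by
  obtain ⟨u, v, he, hv, rfl, rfl⟩ := h
  have hv2 : v.2 = i + 1 := hD.snd_eq_of_mem ⟨hv, rfl, rfl⟩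
  exact ⟨u, he.1.1, by have := he.1.2.1; omega, rfl⟩

theorem DescC.exists_childC_of_classAt_succ {E D : Set (Q × ℕ)} {i j : ℕ}
    (hED : DescC A w E D) (hE : ClassAt A w E j) (hD : ClassAt A w D (i + 1)) (hj : j ≤ i) :
    ∃ W, ClassAt A w W i ∧ DescC A w E W ∧ childC A w W D := by
  rcases Relation.ReflTransGen.cases_tail hED with rfl | ⟨W, hEW, hWD⟩
  · exact absurd (hE.level_eq hD) (by omega)
  · exact ⟨W, hWD.classAt_of_classAt_succ hD, hEW, hWD⟩

theorem IsFirst.level_le {gl : Set (Q × ℕ) → ℕ} {m i j : ℕ} {E U : Set (Q × ℕ)}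
    (hE : IsFirst A w gl m E j) (hU : ClassAt A w U i) (hm : gl U = m) : j ≤ i := by
  by_contra! h
  exact hE.2.2 U i hU hm (Or.inl h)

theorem descFirst_iff_of_classAt_succ {gl : Set (Q × ℕ) → ℕ} {i : ℕ} {U D : Set (Q × ℕ)}
    (hU : ClassAt A w U i) (hD : ClassAt A w D (i + 1)) :
    DescFirst A w gl (gl U) D ↔
      ∃ W, ClassAt A w W i ∧ DescFirst A w gl (gl U) W ∧ childC A w W D := by
  constructor
  · rintro ⟨E, j, hE, hED⟩
    obtain ⟨W, hW, hEW, hWD⟩ :=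
      hED.exists_childC_of_classAt_succ hE.1 hD (hE.level_le hU rfl)
    exact ⟨W, hW, ⟨E, j, hE, hEW⟩, hWD⟩
  · rintro ⟨W, -, ⟨E, j, hE, hEW⟩, hWD⟩
    exact ⟨E, j, hE, hEW.tail hWD⟩

theorem isLsf_iff_isLmd {gl : Set (Q × ℕ) → ℕ} {i : ℕ} {U C : Set (Q × ℕ)}
    (hU : ClassAt A w U i) : IsLsf A w gl i U C ↔ IsLmd A w gl (gl U) (i + 1) C := by
  have candidates : ∀ D,
      (ClassAt A w D (i + 1) ∧ ∃ W, LRrel A w gl i U W ∧ childC A w W D) ↔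
        ClassAt A w D (i + 1) ∧ DescFirst A w gl (gl U) D := by
    intro D
    refine and_congr_right fun hD => ?_
    rw [descFirst_iff_of_classAt_succ hU hD]
    exact exists_congr fun W =>
      ⟨fun ⟨⟨_, hW, hdesc⟩, hWD⟩ => ⟨hW, hdesc, hWD⟩,
        fun ⟨hW, hdesc, hWD⟩ => ⟨⟨hU, hW, hdesc⟩, hWD⟩⟩
  simp only [IsLsf, IsLmd, candidates, and_assoc, and_imp]

end

theorem labels_inter_eq_uncle_labels_general
    (A : NBW Alph Q) (w : ℕ → Alph) (gl : Set (Q × ℕ) → ℕ)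
    (i : ℕ) (U' : Set (Q × ℕ)) :
    ∀ m, (IsLmd A w gl m (i + 1) U' ∧ ∃ W, ClassAt A w W i ∧ gl W = m) ↔
      (∃ U, ClassAt A w U i ∧ IsLsf A w gl i U U' ∧ gl U = m) := by
  intro m
  constructor
  · rintro ⟨hlmd, W, hW, rfl⟩
    exact ⟨W, hW, (isLsf_iff_isLmd hW).2 hlmd, rfl⟩
  · rintro ⟨U, hU, hlsf, rfl⟩
    exact ⟨(isLsf_iff_isLmd hU).1 hlsf, U, hU, rfl⟩

/-- Lemma: valid labels of `U'` occurring on level `i` are exactly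
the labels of the `⋖̲_i`-uncles of `U'`:
`labels(U') ∩ {gl(W) ∣ W on level i} = {gl(U) ∣ U ∈ lpf_i(U')}`. -/
theorem labels_inter_eq_uncle_labels [Fintype Alph] [Fintype Q]
    (A : NBW Alph Q) (w : ℕ → Alph) (gl : Set (Q × ℕ) → ℕ) (hgl : GlSpec A w gl)
    (i : ℕ) (U' : Set (Q × ℕ)) (hU' : ClassAt A w U' (i + 1)) :
    ∀ m, (IsLmd A w gl m (i + 1) U' ∧ ∃ W, ClassAt A w W i ∧ gl W = m) ↔
      (∃ U, ClassAt A w U i ∧ IsLsf A w gl i U U' ∧ gl U = m) :=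
  labels_inter_eq_uncle_labels_general A w gl i U'
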